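/- arXiv:1809.06369 — 8 statements merged into one kernel-verified Lean document; each statement's English description precedes it below -/
import Mathlib

section
/- Let 𝓗 be a complex Hilbert space, let H₀ and V be bounded self-adjoint operators on 𝓗, and let A and B be bounded operators on 𝓗. Then for every t ≥ 0: ‖[τ_t^{H₀+V}(A), B]‖ ≤ ‖[τ_t^{H₀}(A), B]‖ + 2‖B‖ ∫_0^t ‖[τ_s^{H₀}(A), V]‖ ds. -/
/-!
Along `g s = τ_s^{H₀+V}(τ_{t-s}^{H₀}(A))`, which runs from `τ_t^{H₀}(A)` at `s = 0` to
`τ_t^{H₀+V}(A)` at `s = t`, the `H₀`-parts of the two generators cancel, so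
`g' s = τ_s^{H₀+V}(i[V, τ_{t-s}^{H₀}(A)])`. As `τ_s^{H₀+V}` is conjugation by a unitary it is
isometric, whence `‖τ_t^{H₀+V}(A) - τ_t^{H₀}(A)‖ ≤ ∫_0^t ‖[τ_s^{H₀}(A), V]‖ ds`; taking the
commutator with `B` costs at most a factor `2‖B‖`.
-/

open MeasureTheory intervalIntegral

variable {𝓗 : Type*} [NormedAddCommGroup 𝓗] [InnerProductSpace ℂ 𝓗] [CompleteSpace 𝓗]

/-- Heisenberg evolution `τ_t^H(A) = e^{itH} A e^{−itH}` of a bounded operator `A`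
under a bounded Hamiltonian `H`. -/
noncomputable def heisenberg (H : 𝓗 →L[ℂ] 𝓗) (t : ℝ) (A : 𝓗 →L[ℂ] 𝓗) : 𝓗 →L[ℂ] 𝓗 :=
  NormedSpace.exp ((Complex.I * (t : ℂ)) • H) * A *
    NormedSpace.exp (-((Complex.I * (t : ℂ)) • H))

/-- The commutator `[A, B] = AB − BA` of two bounded operators. -/
def commutatorCLM (A B : 𝓗 →L[ℂ] 𝓗) : 𝓗 →L[ℂ] 𝓗 := A * B - B * A

open NormedSpace Complex

section ConjugationByExp

variable {𝔸 : Type*} [NormedRing 𝔸] [NormedAlgebra ℝ 𝔸] [CompleteSpace 𝔸]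

theorem continuous_exp_smul_mul_mul_exp_neg_smul (X : 𝔸) {Y : ℝ → 𝔸} (hY : Continuous Y) :
    Continuous fun r : ℝ => exp (r • X) * Y r * exp (-(r • X)) := by
  have hexp : Continuous fun r : ℝ => exp (r • X) :=
    (differentiable_exp_smul_const ℝ X).continuous
  simp_rw [← neg_smul]
  exact (hexp.mul hY).mul (hexp.comp continuous_neg)

theorem hasDerivAt_exp_neg_smul (X : 𝔸) (s : ℝ) :
    HasDerivAt (fun r : ℝ => exp (-(r • X))) (-X * exp (-(s • X))) s := by
  simpa only [smul_neg] using hasDerivAt_exp_smul_const' (-X) s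

theorem hasDerivAt_exp_smul_mul_mul_exp_neg_smul (X : 𝔸) {Y : ℝ → 𝔸} {Y' : 𝔸} {s : ℝ}
    (hY : HasDerivAt Y Y' s) :
    HasDerivAt (fun r : ℝ => exp (r • X) * Y r * exp (-(r • X)))
      (exp (s • X) * (Y' + (X * Y s - Y s * X)) * exp (-(s • X))) s := by
  refine (((hasDerivAt_exp_smul_const X s).mul hY).mul
    (hasDerivAt_exp_neg_smul X s)).congr_deriv ?_
  simp only [Pi.mul_apply]
  noncomm_ring

theorem hasDerivAt_exp_smul_mul_exp_neg_smul (X A : 𝔸) (s : ℝ) :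
    HasDerivAt (fun r : ℝ => exp (r • X) * A * exp (-(r • X)))
      (X * (exp (s • X) * A * exp (-(s • X))) - exp (s • X) * A * exp (-(s • X)) * X) s := by
  have hcomm : Commute X (exp (s • X)) := ((Commute.refl X).smul_right s).exp_right
  have hcomm_neg : Commute X (exp (-(s • X))) := ((Commute.refl X).smul_right s).neg_right.exp_right
  refine (hasDerivAt_exp_smul_mul_mul_exp_neg_smul X (hasDerivAt_const s A)).congr_deriv ?_
  simp only [zero_add, mul_sub, sub_mul, mul_assoc]
  rw [← mul_assoc X (exp (s • X)), hcomm.eq, mul_assoc, ← hcomm_neg.eq]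

end ConjugationByExp

theorem heisenberg_eq_exp_smul (H : 𝓗 →L[ℂ] 𝓗) (t : ℝ) (A : 𝓗 →L[ℂ] 𝓗) :
    heisenberg H t A = exp (t • (I • H)) * A * exp (-(t • (I • H))) := by
  rw [heisenberg, mul_comm, mul_smul, Complex.coe_smul]

theorem heisenberg_zero (H A : 𝓗 →L[ℂ] 𝓗) : heisenberg H 0 A = A := by
  simp [heisenberg]

theorem continuous_heisenberg (H : 𝓗 →L[ℂ] 𝓗) {Y : ℝ → 𝓗 →L[ℂ] 𝓗} (hY : Continuous Y) :
    Continuous fun r => heisenberg H r (Y r) := by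
  simp_rw [heisenberg_eq_exp_smul]
  exact continuous_exp_smul_mul_mul_exp_neg_smul _ hY

theorem hasDerivAt_heisenberg (H A : 𝓗 →L[ℂ] 𝓗) (s : ℝ) :
    HasDerivAt (fun r => heisenberg H r A) (I • commutatorCLM H (heisenberg H s A)) s := by
  simp_rw [heisenberg_eq_exp_smul]
  refine (hasDerivAt_exp_smul_mul_exp_neg_smul (I • H) A s).congr_deriv ?_
  rw [commutatorCLM, smul_sub, smul_mul_assoc, mul_smul_comm]

theorem hasDerivAt_heisenberg_comp (H : 𝓗 →L[ℂ] 𝓗) {Y : ℝ → 𝓗 →L[ℂ] 𝓗} {Y' : 𝓗 →L[ℂ] 𝓗}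
    {s : ℝ} (hY : HasDerivAt Y Y' s) :
    HasDerivAt (fun r => heisenberg H r (Y r))
      (heisenberg H s (Y' + I • commutatorCLM H (Y s))) s := by
  simp_rw [heisenberg_eq_exp_smul]
  refine (hasDerivAt_exp_smul_mul_mul_exp_neg_smul (I • H) hY).congr_deriv ?_
  rw [commutatorCLM, smul_sub, smul_mul_assoc, mul_smul_comm]

theorem norm_heisenberg {H : 𝓗 →L[ℂ] 𝓗} (hH : IsSelfAdjoint H) (t : ℝ) (A : 𝓗 →L[ℂ] 𝓗) :
    ‖heisenberg H t A‖ = ‖A‖ := by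
  let : NormedAlgebra ℚ (𝓗 →L[ℂ] 𝓗) := .restrictScalars ℚ ℂ _
  have hskew : (I * t) • H ∈ skewAdjoint (𝓗 →L[ℂ] 𝓗) :=
    hH.smul_mem_skewAdjoint (skewAdjoint.mem_iff.mpr (by simp))
  rw [heisenberg, CStarRing.norm_mul_mem_unitary _
      (exp_mem_unitary_of_mem_skewAdjoint (neg_mem hskew)),
    CStarRing.norm_mem_unitary_mul _ (exp_mem_unitary_of_mem_skewAdjoint hskew)]

theorem norm_commutatorCLM_le (A B : 𝓗 →L[ℂ] 𝓗) : ‖commutatorCLM A B‖ ≤ 2 * ‖B‖ * ‖A‖ :=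
  calc ‖A * B - B * A‖ ≤ ‖A‖ * ‖B‖ + ‖B‖ * ‖A‖ :=
        (norm_sub_le _ _).trans (add_le_add (norm_mul_le _ _) (norm_mul_le _ _))
    _ = 2 * ‖B‖ * ‖A‖ := by ring

theorem heisenberg_add_sub_heisenberg (H₀ V A : 𝓗 →L[ℂ] 𝓗) (t : ℝ) :
    heisenberg (H₀ + V) t A - heisenberg H₀ t A =
      ∫ s in (0 : ℝ)..t,
        heisenberg (H₀ + V) s (I • commutatorCLM V (heisenberg H₀ (t - s) A)) := by
  have hderiv : ∀ s, HasDerivAt (fun r => heisenberg (H₀ + V) r (heisenberg H₀ (t - r) A))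
      (heisenberg (H₀ + V) s (I • commutatorCLM V (heisenberg H₀ (t - s) A))) s := by
    intro s
    refine (hasDerivAt_heisenberg_comp (H₀ + V)
      ((hasDerivAt_heisenberg H₀ A (t - s)).comp_const_sub t s)).congr_deriv ?_
    simp only [commutatorCLM, add_mul, mul_add, smul_sub, smul_add]
    congr 1
    abel
  have hcont : Continuous fun s =>
      heisenberg (H₀ + V) s (I • commutatorCLM V (heisenberg H₀ (t - s) A)) := by
    refine continuous_heisenberg _ (Continuous.const_smul ?_ I)
    have hevol : Continuous fun s => heisenberg H₀ (t - s) A :=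
      (continuous_heisenberg H₀ continuous_const).comp (continuous_sub_left t)
    unfold commutatorCLM
    fun_prop
  rw [integral_eq_sub_of_hasDerivAt (fun s _ => hderiv s) (hcont.intervalIntegrable _ _)]
  simp only [sub_self, sub_zero, heisenberg_zero]

theorem norm_heisenberg_add_sub_heisenberg_le {H₀ V : 𝓗 →L[ℂ] 𝓗} (hH₀ : IsSelfAdjoint H₀)
    (hV : IsSelfAdjoint V) (A : 𝓗 →L[ℂ] 𝓗) {t : ℝ} (ht : 0 ≤ t) :
    ‖heisenberg (H₀ + V) t A - heisenberg H₀ t A‖ ≤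
      ∫ s in (0 : ℝ)..t, ‖commutatorCLM (heisenberg H₀ s A) V‖ := by
  have hnorm : ∀ s, ‖heisenberg (H₀ + V) s (I • commutatorCLM V (heisenberg H₀ (t - s) A))‖ =
      ‖commutatorCLM (heisenberg H₀ (t - s) A) V‖ := fun s => by
    rw [norm_heisenberg (hH₀.add hV), norm_smul, norm_I, one_mul, ← norm_neg, commutatorCLM,
      commutatorCLM, neg_sub]
  rw [heisenberg_add_sub_heisenberg]
  calc _ ≤ ∫ s in (0 : ℝ)..t,
          ‖heisenberg (H₀ + V) s (I • commutatorCLM V (heisenberg H₀ (t - s) A))‖ :=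
        intervalIntegral.norm_integral_le_integral_norm ht
    _ = ∫ s in (0 : ℝ)..t, ‖commutatorCLM (heisenberg H₀ (t - s) A) V‖ := by simp_rw [hnorm]
    _ = _ := by
        simpa using integral_comp_sub_left (a := 0) (b := t)
          (fun s => ‖commutatorCLM (heisenberg H₀ s A) V‖) t

/-- The interaction-picture (Duhamel) inequality, Eq. (10) of the paper:
`‖[τ_t^{H₀+V}(A), B]‖ ≤ ‖[τ_t^{H₀}(A), B]‖ + 2‖B‖ ∫_0^t ‖[τ_s^{H₀}(A), V]‖ ds`
for bounded self-adjoint `H₀, V`, bounded `A, B` and `t ≥ 0`. -/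
theorem duhamel_commutator_bound (H₀ V A B : 𝓗 →L[ℂ] 𝓗)
    (hH₀ : IsSelfAdjoint H₀) (hV : IsSelfAdjoint V) (t : ℝ) (ht : 0 ≤ t) :
    ‖commutatorCLM (heisenberg (H₀ + V) t A) B‖ ≤
      ‖commutatorCLM (heisenberg H₀ t A) B‖ +
        2 * ‖B‖ * ∫ s in (0 : ℝ)..t, ‖commutatorCLM (heisenberg H₀ s A) V‖ := by
  have hsplit : commutatorCLM (heisenberg (H₀ + V) t A) B = commutatorCLM (heisenberg H₀ t A) B +
      commutatorCLM (heisenberg (H₀ + V) t A - heisenberg H₀ t A) B := by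
    simp only [commutatorCLM]
    noncomm_ring
  calc ‖commutatorCLM (heisenberg (H₀ + V) t A) B‖
      ≤ ‖commutatorCLM (heisenberg H₀ t A) B‖ +
          2 * ‖B‖ * ‖heisenberg (H₀ + V) t A - heisenberg H₀ t A‖ := by
        rw [hsplit]
        exact (norm_add_le _ _).trans (add_le_add_right (norm_commutatorCLM_le _ _) _)
    _ ≤ _ := by
        gcongr
        exact norm_heisenberg_add_sub_heisenberg_le hH₀ hV A ht
end

section
/- Let 𝓗 be a complex Hilbert space, let H₁ and H₂ be bounded self-adjoint operators on 𝓗, and let O be a bounded operator on 𝓗. Then for every t ≥ 0: ‖τ_t^{H₁}(O) − τ_t^{H₂}(O)‖ ≤ ∫_0^t ‖[τ_s^{H₂}(O), H₁ − H₂]‖ ds. -/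
/-!
Pass to the interaction picture `g(s) = e^{-isH₁} τ_s^{H₂}(O) e^{isH₁}`. Then
`τ_t^{H₁}(O) − τ_t^{H₂}(O) = e^{itH₁} (g(0) − g(t)) e^{−itH₁}`, and
`g'(s) = e^{-isH₁} i[τ_s^{H₂}(O), H₁ − H₂] e^{isH₁}`. Since `e^{isH₁}` is unitary, conjugating by it
preserves norms, so the bound is the fundamental theorem of calculus followed by `‖∫ f‖ ≤ ∫ ‖f‖`.
-/

open MeasureTheory intervalIntegral

variable {𝓗 : Type*} [NormedAddCommGroup 𝓗] [InnerProductSpace ℂ 𝓗] [CompleteSpace 𝓗]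

open NormedSpace

section ExpConj

variable {𝔸 : Type*} [NormedRing 𝔸] [NormedAlgebra ℝ 𝔸]

noncomputable def expConj (B : 𝔸) (t : ℝ) (x : 𝔸) : 𝔸 :=
  exp (t • B) * x * exp ((-t) • B)

@[simp]
lemma expConj_zero (B x : 𝔸) : expConj B 0 x = x := by
  simp [expConj, exp_zero]

lemma expConj_sub (B : 𝔸) (t : ℝ) (x y : 𝔸) :
    expConj B t (x - y) = expConj B t x - expConj B t y := by
  simp only [expConj, mul_sub, sub_mul]

variable [CompleteSpace 𝔸]

lemma exp_neg_smul_mul_exp_smul (B : 𝔸) (t : ℝ) : exp ((-t) • B) * exp (t • B) = 1 := by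
  let +nondep : NormedAlgebra ℚ 𝔸 := .restrictScalars ℚ ℝ 𝔸
  rw [← exp_add_of_commute ((Commute.refl B).smul_left _ |>.smul_right _), ← add_smul,
    neg_add_cancel, zero_smul, exp_zero]

lemma expConj_mul (B : 𝔸) (t : ℝ) (x y : 𝔸) :
    expConj B t (x * y) = expConj B t x * expConj B t y := by
  simp only [expConj, mul_assoc, ← mul_assoc (exp ((-t) • B)) (exp (t • B)),
    exp_neg_smul_mul_exp_smul, one_mul]

lemma expConj_self (B : 𝔸) (t : ℝ) : expConj B t B = B := by
  let +nondep : NormedAlgebra ℚ 𝔸 := .restrictScalars ℚ ℝ 𝔸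
  simpa [expConj] using ((Commute.refl B).smul_right (-t)).exp_neg_mul_mul_exp_eq_self

lemma expConj_expConj_neg (B : 𝔸) (t : ℝ) (x : 𝔸) : expConj B t (expConj (-B) t x) = x := by
  have h := exp_neg_smul_mul_exp_smul B (-t)
  rw [neg_neg] at h
  simp only [expConj, smul_neg, ← neg_smul, neg_neg, mul_assoc, h, mul_one]
  rw [← mul_assoc, h, one_mul]

lemma hasDerivAt_expConj (B : 𝔸) {P : ℝ → 𝔸} {P' : 𝔸} {t : ℝ} (hP : HasDerivAt P P' t) :
    HasDerivAt (fun u => expConj B u (P u)) (expConj B t (P' + (B * P t - P t * B))) t := by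
  have hexp := hasDerivAt_exp_smul_const (𝕂 := ℝ) B t
  have hexp_neg : HasDerivAt (fun u : ℝ => exp ((-u) • B)) (-(B * exp ((-t) • B))) t := by
    have := (hasDerivAt_exp_smul_const' (𝕂 := ℝ) B (-t)).scomp t (hasDerivAt_neg t)
    simpa [Function.comp_def] using this
  refine ((hexp.fun_mul hP).fun_mul hexp_neg).congr_deriv ?_
  simp only [expConj, mul_add, add_mul, mul_sub, sub_mul, mul_neg, mul_assoc]
  abel

lemma hasDerivAt_expConj_const (B x : 𝔸) (t : ℝ) :
    HasDerivAt (fun u => expConj B u x) (B * expConj B t x - expConj B t x * B) t := by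
  simpa [expConj_sub, expConj_mul, expConj_self] using
    hasDerivAt_expConj B (hasDerivAt_const t x)

lemma hasDerivAt_expConj_neg_expConj (B₁ B₂ x : 𝔸) (t : ℝ) :
    HasDerivAt (fun u => expConj (-B₁) u (expConj B₂ u x))
      (expConj (-B₁) t ((B₂ - B₁) * expConj B₂ t x - expConj B₂ t x * (B₂ - B₁))) t := by
  convert hasDerivAt_expConj (-B₁) (hasDerivAt_expConj_const B₂ x t) using 2
  noncomm_ring

@[fun_prop]
lemma Continuous.expConj (B : 𝔸) {P : ℝ → 𝔸} (hP : Continuous P) :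
    Continuous (fun u => _root_.expConj B u (P u)) := by
  let +nondep : NormedAlgebra ℚ 𝔸 := .restrictScalars ℚ ℝ 𝔸
  unfold _root_.expConj
  fun_prop

lemma norm_expConj [StarRing 𝔸] [CStarRing 𝔸] [StarModule ℝ 𝔸] {B : 𝔸}
    (hB : B ∈ skewAdjoint 𝔸) (t : ℝ) (x : 𝔸) : ‖expConj B t x‖ = ‖x‖ := by
  let +nondep : NormedAlgebra ℚ 𝔸 := .restrictScalars ℚ ℝ 𝔸
  have hU (s : ℝ) : exp (s • B) ∈ unitary 𝔸 :=
    exp_mem_unitary_of_mem_skewAdjoint (skewAdjoint.smul_mem s hB)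
  rw [expConj, CStarRing.norm_mul_mem_unitary _ (hU _), CStarRing.norm_mem_unitary_mul _ (hU t)]

end ExpConj

lemma heisenberg_eq_expConj (H A : 𝓗 →L[ℂ] 𝓗) (t : ℝ) :
    heisenberg H t A = expConj (Complex.I • H) t A := by
  simp only [heisenberg, expConj, mul_comm Complex.I, mul_smul, Complex.coe_smul, neg_smul]

omit [CompleteSpace 𝓗] in
lemma I_smul_commutatorCLM_sub (A H₁ H₂ : 𝓗 →L[ℂ] 𝓗) :
    Complex.I • commutatorCLM A (H₁ - H₂) =
      (Complex.I • H₂ - Complex.I • H₁) * A - A * (Complex.I • H₂ - Complex.I • H₁) := by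
  simp only [commutatorCLM, smul_sub, mul_sub, sub_mul, smul_mul_assoc, mul_smul_comm]
  abel

theorem operator_difference_bound_general (H₁ H₂ O : 𝓗 →L[ℂ] 𝓗)
    (hH₁ : IsSelfAdjoint H₁) (t : ℝ) (ht : 0 ≤ t) :
    ‖heisenberg H₁ t O - heisenberg H₂ t O‖ ≤
      ∫ s in (0 : ℝ)..t, ‖commutatorCLM (heisenberg H₂ s O) (H₁ - H₂)‖ := by
  have hB₁ : Complex.I • H₁ ∈ skewAdjoint _ := hH₁.I_smul_mem_skewAdjoint
  simp only [heisenberg_eq_expConj]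
  set B₁ := Complex.I • H₁
  set B₂ := Complex.I • H₂
  set g := fun u => expConj (-B₁) u (expConj B₂ u O)
  set g' := fun s => expConj (-B₁) s (Complex.I • commutatorCLM (expConj B₂ s O) (H₁ - H₂))
  have hg (s : ℝ) : HasDerivAt g (g' s) s := by
    simpa only [g', I_smul_commutatorCLM_sub] using hasDerivAt_expConj_neg_expConj B₁ B₂ O s
  have hg'_cont : Continuous g' := by
    simp only [g', commutatorCLM]
    fun_prop
  have hdiff : expConj B₁ t O - expConj B₂ t O = expConj B₁ t (g 0 - g t) := by
    simp only [g, expConj_zero, expConj_sub, expConj_expConj_neg]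
  calc ‖expConj B₁ t O - expConj B₂ t O‖ = ‖g t - g 0‖ := by
        rw [hdiff, norm_expConj hB₁, norm_sub_rev]
    _ = ‖∫ s in (0 : ℝ)..t, g' s‖ := by
        rw [integral_eq_sub_of_hasDerivAt (fun s _ => hg s) (hg'_cont.intervalIntegrable 0 t)]
    _ ≤ ∫ s in (0 : ℝ)..t, ‖g' s‖ := norm_integral_le_integral_norm ht
    _ = ∫ s in (0 : ℝ)..t, ‖commutatorCLM (expConj B₂ s O) (H₁ - H₂)‖ := by
        simp only [g', norm_expConj (neg_mem hB₁), norm_smul, Complex.norm_I, one_mul]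

/-- Appendix C of the paper: the difference of an operator evolved under two
different bounded self-adjoint Hamiltonians is bounded by
`‖τ_t^{H₁}(O) − τ_t^{H₂}(O)‖ ≤ ∫_0^t ‖[τ_s^{H₂}(O), H₁ − H₂]‖ ds` for `t ≥ 0`. -/
theorem operator_difference_bound (H₁ H₂ O : 𝓗 →L[ℂ] 𝓗)
    (hH₁ : IsSelfAdjoint H₁) (hH₂ : IsSelfAdjoint H₂) (t : ℝ) (ht : 0 ≤ t) :
    ‖heisenberg H₁ t O - heisenberg H₂ t O‖ ≤
      ∫ s in (0 : ℝ)..t, ‖commutatorCLM (heisenberg H₂ s O) (H₁ - H₂)‖ :=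
  operator_difference_bound_general H₁ H₂ O hH₁ t ht
end

section
/- Let d ≥ 1 be an integer and let σ ∈ (0,1) be real. There exists a constant C > 0, depending only on d and σ, such that for all s ≥ 0: ∫_{s^{1/(1−σ)}}^∞ ρ^{d−1} e^{−ρ^{1−σ}} dρ ≤ C e^{−s} (1 + s^{(d−1+σ)/(1−σ)}). -/
open MeasureTheory Real Set

/-!
Substituting `t = ρ ^ (1 - σ)` turns the integral into `(1 - σ)⁻¹ ∫_s^∞ e^{-t} t^α` with
`α = (d - 1 + σ) / (1 - σ)`, an upper incomplete gamma integral. Shifting `t = s + u` and using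
`(s + u)^α ≤ 2^α (s^α + u^α)` bounds it by `2^α e^{-s} (s^α + Γ(α + 1))`.
-/

theorem Real.add_rpow_le_two_rpow_mul_rpow_add_rpow {a b p : ℝ} (ha : 0 ≤ a) (hb : 0 ≤ b)
    (hp : 0 ≤ p) : (a + b) ^ p ≤ 2 ^ p * (a ^ p + b ^ p) := calc
  (a + b) ^ p ≤ (2 * max a b) ^ p := by
    gcongr
    rw [two_mul]
    exact add_le_add (le_max_left a b) (le_max_right a b)
  _ = 2 ^ p * max a b ^ p := mul_rpow zero_le_two (le_max_of_le_left ha)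
  _ ≤ 2 ^ p * (a ^ p + b ^ p) := by
    gcongr
    rcases max_choice a b with h | h <;> rw [h]
    · linarith [rpow_nonneg hb p]
    · linarith [rpow_nonneg ha p]

theorem integral_Ioi_zero_comp_add_right (f : ℝ → ℝ) (c : ℝ) :
    ∫ x in Ioi 0, f (x + c) = ∫ x in Ioi c, f x := by
  have := (measurePreserving_add_right volume c).setIntegral_preimage_emb
    (measurableEmbedding_addRight c) f (Ioi c)
  rwa [preimage_add_const_Ioi, sub_self] at this

theorem integral_Ioi_exp_neg_mul_rpow_le {α s : ℝ} (hα : 0 ≤ α) (hs : 0 ≤ s) :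
    ∫ t in Ioi s, exp (-t) * t ^ α ≤ 2 ^ α * exp (-s) * (s ^ α + Gamma (α + 1)) := by
  have hGamma : IntegrableOn (fun u : ℝ ↦ exp (-u) * u ^ α) (Ioi 0) := by
    simpa using GammaIntegral_convergent (s := α + 1) (by linarith)
  rw [← integral_Ioi_zero_comp_add_right]
  calc ∫ u in Ioi 0, exp (-(u + s)) * (u + s) ^ α
      ≤ ∫ u in Ioi 0, 2 ^ α * exp (-s) * (s ^ α * exp (-u) + exp (-u) * u ^ α) := by
        refine integral_mono_of_nonneg ?_ ?_ ?_
        · filter_upwards [ae_restrict_mem measurableSet_Ioi] with u hu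
          have : 0 ≤ u + s := by linarith [mem_Ioi.mp hu]
          positivity
        · exact (((integrableOn_exp_neg_Ioi 0).const_mul _).add hGamma).const_mul _
        · filter_upwards [ae_restrict_mem measurableSet_Ioi] with u hu
          have hu : 0 ≤ u := (mem_Ioi.mp hu).le
          calc exp (-(u + s)) * (u + s) ^ α ≤ exp (-(u + s)) * (2 ^ α * (u ^ α + s ^ α)) := by
                gcongr
                exact add_rpow_le_two_rpow_mul_rpow_add_rpow hu hs hα
            _ = 2 ^ α * exp (-s) * (s ^ α * exp (-u) + exp (-u) * u ^ α) := by
                rw [neg_add, exp_add]; ring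
    _ = 2 ^ α * exp (-s) * (s ^ α + Gamma (α + 1)) := by
        rw [integral_const_mul, integral_add ((integrableOn_exp_neg_Ioi 0).const_mul _) hGamma,
          integral_const_mul, integral_exp_neg_Ioi_zero, Gamma_eq_integral (by linarith),
          add_sub_cancel_right, mul_one]

theorem integral_Ioi_pow_mul_exp_neg_rpow {p : ℝ} (hp : 0 < p) (n : ℕ) {s : ℝ} (hs : 0 ≤ s) :
    ∫ ρ in Ioi (s ^ p⁻¹), ρ ^ n * exp (-ρ ^ p) =
      p⁻¹ * ∫ t in Ioi s, exp (-t) * t ^ ((n + 1 - p) / p) := by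
  rw [← integral_comp_rpow_Ioi_of_pos' hp hs, ← integral_const_mul]
  refine setIntegral_congr_fun measurableSet_Ioi fun ρ hρ ↦ ?_
  have hρ : 0 < ρ := lt_of_le_of_lt (by positivity) hρ
  -- `ρ ^ n = p⁻¹ * (p * ρ ^ (p - 1)) * (ρ ^ p) ^ ((n + 1 - p) / p)`
  rw [smul_eq_mul, ← rpow_mul hρ.le, mul_div_cancel₀ _ hp.ne', ← rpow_natCast]
  field_simp
  rw [← rpow_add hρ]
  ring_nf

/-- The stretched-exponential tail estimate from Appendix B.2 of the paper: for
`d ≥ 1` and `σ ∈ (0,1)` there is a constant `C > 0` depending only on `d` and `σ`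
such that for all `s ≥ 0`,
`∫_{s^{1/(1−σ)}}^∞ ρ^{d−1} e^{−ρ^{1−σ}} dρ ≤ C e^{−s} (1 + s^{(d−1+σ)/(1−σ)})`. -/
theorem stretched_exponential_tail_estimate (d : ℕ) (hd : 1 ≤ d)
    (σ : ℝ) (hσ : σ ∈ Set.Ioo (0 : ℝ) 1) :
    ∃ C : ℝ, 0 < C ∧ ∀ s : ℝ, 0 ≤ s →
      (∫ ρ in Set.Ioi (s ^ (1 / (1 - σ))), ρ ^ (d - 1) * Real.exp (-(ρ ^ (1 - σ)))) ≤
        C * Real.exp (-s) * (1 + s ^ ((d - 1 + σ) / (1 - σ))) := by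
  obtain ⟨hσ0, hσ1⟩ := hσ
  have hp : 0 < 1 - σ := sub_pos.mpr hσ1
  set α := ((d : ℝ) - 1 + σ) / (1 - σ)
  have hα : 0 ≤ α := div_nonneg (by linarith [(Nat.one_le_cast (α := ℝ)).mpr hd]) hp.le
  have hΓ : 0 < Gamma (α + 1) := Gamma_pos_of_pos (by linarith)
  refine ⟨2 ^ α * (1 + Gamma (α + 1)) / (1 - σ), by positivity, fun s hs ↦ ?_⟩
  have hexponent : (((d - 1 : ℕ) : ℝ) + 1 - (1 - σ)) / (1 - σ) = α := by
    rw [Nat.cast_sub hd, Nat.cast_one]; ring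
  rw [one_div, integral_Ioi_pow_mul_exp_neg_rpow hp _ hs, hexponent]
  have hsα : 0 ≤ s ^ α := rpow_nonneg hs α
  calc (1 - σ)⁻¹ * ∫ t in Ioi s, exp (-t) * t ^ α
      ≤ (1 - σ)⁻¹ * (2 ^ α * exp (-s) * (s ^ α + Gamma (α + 1))) := by
        gcongr
        exact integral_Ioi_exp_neg_mul_rpow_le hα hs
    _ ≤ (1 - σ)⁻¹ * (2 ^ α * exp (-s) * ((1 + Gamma (α + 1)) * (1 + s ^ α))) := by
        gcongr
        nlinarith
    _ = 2 ^ α * (1 + Gamma (α + 1)) / (1 - σ) * exp (-s) * (1 + s ^ α) := by ring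
end

section
/- Let α > d > 0 be real numbers and define g(σ) = (2(1−σ) + d) / ((1−σ)(σα − d)) for σ ∈ (d/α, 1). Let S = √(1 + 2/d − 2/α) and σ* = 1 + d/2 − (d/2) S. Then σ* ∈ (d/α, 1), and for every σ ∈ (d/α, 1): g(σ) ≥ g(σ*) = 2(α − d + dα(1 + S)) / (α − d)². -/
/-- Appendix D.2 of the paper: minimization of the LC2 polynomial-term exponent
`g(σ) = (2(1−σ) + d)/((1−σ)(σα − d))` over `σ ∈ (d/α, 1)`. With
`S = √(1 + 2/d − 2/α)` and `σ* = 1 + d/2 − (d/2)S`, the minimizer `σ*` lies in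
`(d/α, 1)` and `g(σ) ≥ g(σ*) = 2(α − d + dα(1 + S))/(α − d)²`. -/
theorem lc2_poly2_minimization (d α : ℝ) (hd : 0 < d) (hα : d < α) :
    (1 + d / 2 - (d / 2) * Real.sqrt (1 + 2 / d - 2 / α)) ∈ Set.Ioo (d / α) 1 ∧
    (∀ σ ∈ Set.Ioo (d / α) (1 : ℝ),
      (2 * (1 - (1 + d / 2 - (d / 2) * Real.sqrt (1 + 2 / d - 2 / α))) + d) /
          ((1 - (1 + d / 2 - (d / 2) * Real.sqrt (1 + 2 / d - 2 / α))) *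
            ((1 + d / 2 - (d / 2) * Real.sqrt (1 + 2 / d - 2 / α)) * α - d)) ≤
        (2 * (1 - σ) + d) / ((1 - σ) * (σ * α - d))) ∧
    (2 * (1 - (1 + d / 2 - (d / 2) * Real.sqrt (1 + 2 / d - 2 / α))) + d) /
        ((1 - (1 + d / 2 - (d / 2) * Real.sqrt (1 + 2 / d - 2 / α))) *
          ((1 + d / 2 - (d / 2) * Real.sqrt (1 + 2 / d - 2 / α)) * α - d)) =
      2 * (α - d + d * α * (1 + Real.sqrt (1 + 2 / d - 2 / α))) / (α - d) ^ 2 := by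
  have hα0 : (0 : ℝ) < α := hd.trans hα
  set S := Real.sqrt (1 + 2 / d - 2 / α) with hSdef
  have harg : (1 : ℝ) < 1 + 2 / d - 2 / α := by
    have h2 : 2 / α < 2 / d := div_lt_div_of_pos_left (by norm_num) hd hα
    linarith
  have hS2 : S ^ 2 = 1 + 2 / d - 2 / α := Real.sq_sqrt (by linarith)
  have hSnn : 0 ≤ S := Real.sqrt_nonneg _
  have hS1 : 1 < S := by nlinarith [hS2]
  have hS2' : d * α * S ^ 2 = d * α + 2 * α - 2 * d := by
    rw [hS2]; field_simp
  -- positivity of pieces at σ*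
  have hu : 0 < 1 - (1 + d / 2 - (d / 2) * S) := by nlinarith
  have hden : 0 < (1 + d / 2 - (d / 2) * S) * α - d := by nlinarith [hS2']
  have hmem : (1 + d / 2 - (d / 2) * S) ∈ Set.Ioo (d / α) 1 := by
    constructor
    · rw [div_lt_iff₀ hα0]; linarith
    · linarith
  have hA2 : (0 : ℝ) < (α - d) ^ 2 := by nlinarith
  have hK : (0 : ℝ) < α - d + d * α * (1 + S) := by nlinarith
  have hDstar : 0 < (1 - (1 + d / 2 - (d / 2) * S)) * ((1 + d / 2 - (d / 2) * S) * α - d) :=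
    mul_pos hu hden
  have heq : (2 * (1 - (1 + d / 2 - (d / 2) * S)) + d) /
        ((1 - (1 + d / 2 - (d / 2) * S)) * ((1 + d / 2 - (d / 2) * S) * α - d)) =
      2 * (α - d + d * α * (1 + S)) / (α - d) ^ 2 := by
    rw [div_eq_div_iff (ne_of_gt hDstar) (ne_of_gt hA2)]
    linear_combination (-(d / 2) * ((α - d) + d * α - d * α * S)) * hS2'
  refine ⟨hmem, ?_, heq⟩
  intro σ hσ
  have hu' : 0 < 1 - σ := by linarith [hσ.2]
  have hden' : 0 < σ * α - d := by
    have := (div_lt_iff₀ hα0).mp hσ.1; linarith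
  rw [heq, div_le_div_iff₀ hA2 (mul_pos hu' hden')]
  have iden : (2 * (1 - σ) + d) * (α - d) ^ 2 -
      2 * (α - d + d * α * (1 + S)) * ((1 - σ) * (σ * α - d)) =
      (α / 2) * (α - d + d * α * (1 + S)) * (2 * (1 - σ) + d - d * S) ^ 2 := by
    linear_combination (-(α * d ^ 2 / 2) * S + α * d * (2 * (1 - σ) + d) -
      d * ((α - d) + d * α) / 2) * hS2'
  nlinarith [mul_nonneg (mul_nonneg (by linarith : (0:ℝ) ≤ α / 2) hK.le)
      (sq_nonneg (2 * (1 - σ) + d - d * S)), iden]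
end

section
/- For every real d > 0, the number α_M = (3d/2)(1 + √(1 + 8/(9d))) satisfies α_M > 2d. Moreover, for every real α > 2d: (2d+2)/(α+2) ≤ 1 + d/2 − (d/2)√(1 + 2/d − 2/α) if and only if α ≥ α_M. -/
set_option maxHeartbeats 1000000 in
/-- Appendix D.2 of the paper: the threshold `α_M = (3d/2)(1 + √(1 + 8/(9d)))`
satisfies `α_M > 2d`, and for every `α > 2d` the intersection point
`σ_{2;exp} = (2d+2)/(α+2)` lies below the minimizer
`σ_{2;min} = 1 + d/2 − (d/2)√(1 + 2/d − 2/α)` if and only if `α ≥ α_M`. -/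
theorem alphaM_threshold (d : ℝ) (hd : 0 < d) :
    2 * d < (3 * d / 2) * (1 + Real.sqrt (1 + 8 / (9 * d))) ∧
    ∀ α : ℝ, 2 * d < α →
      ((2 * d + 2) / (α + 2) ≤ 1 + d / 2 - (d / 2) * Real.sqrt (1 + 2 / d - 2 / α) ↔
        (3 * d / 2) * (1 + Real.sqrt (1 + 8 / (9 * d))) ≤ α) := by
  have h9 : (0:ℝ) < 9 * d := by linarith
  set s := Real.sqrt (1 + 8 / (9 * d)) with hsdef
  have hs0 : 0 ≤ s := Real.sqrt_nonneg _
  have hs2 : s ^ 2 = 1 + 8 / (9 * d) := Real.sq_sqrt (by positivity)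
  have hs2' : 9 * d * s ^ 2 = 9 * d + 8 := by
    rw [hs2]; field_simp
  have hs1 : 1 ≤ s := by
    nlinarith [hs2, hs0, show (0:ℝ) < 8 / (9 * d) by positivity]
  have hL2 : ∀ _ : Unit, (3 * d / 2 * s) ^ 2 = 9 * d ^ 2 / 4 + 2 * d := by
    intro _
    have h1 : (3 * d / 2 * s) ^ 2 = d / 4 * (9 * d * s ^ 2) := by ring
    rw [h1, hs2']; ring
  constructor
  · nlinarith [hs1, hd]
  intro α hα
  have hα0 : 0 < α := by linarith
  have hα2 : (0:ℝ) < α + 2 := by linarith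
  have hA : 0 < (2 + d) * α - 2 * d := by nlinarith
  set A := (2 + d) * α - 2 * d with hAdef
  have hTeq : 1 + 2 / d - 2 / α = A / (d * α) := by
    rw [hAdef]; field_simp; ring
  have hTpos : 0 < 1 + 2 / d - 2 / α := by
    rw [hTeq]; positivity
  set t := Real.sqrt (1 + 2 / d - 2 / α) with htdef
  have ht0 : 0 ≤ t := Real.sqrt_nonneg _
  have ht2 : t ^ 2 = A / (d * α) := by
    rw [htdef, Real.sq_sqrt hTpos.le, hTeq]
  have hReq : 1 + d / 2 - (2 * d + 2) / (α + 2) = A / (2 * (α + 2)) := by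
    rw [hAdef]; field_simp; ring
  have e1 : (d / 2 * t) ^ 2 = d * A / (4 * α) := by
    have h1 : (d / 2 * t) ^ 2 = d ^ 2 / 4 * t ^ 2 := by ring
    rw [h1, ht2]; field_simp
  have e2 : (A / (2 * (α + 2))) ^ 2 = A ^ 2 / (4 * (α + 2) ^ 2) := by
    field_simp; ring
  have hA' : 0 < (2 + d) * α - 2 * d := by nlinarith
  constructor
  · intro h
    have h' : d / 2 * t ≤ A / (2 * (α + 2)) := by
      have := hReq; linarith
    have hsq : (d / 2 * t) ^ 2 ≤ (A / (2 * (α + 2))) ^ 2 :=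
      pow_le_pow_left₀ (by positivity) h' 2
    rw [e1, e2, div_le_div_iff₀ (by positivity) (by positivity), hAdef] at hsq
    have hQ : 0 ≤ α ^ 2 - 3 * d * α - 2 * d := by
      by_contra hc
      push_neg at hc
      have hp : 0 < ((2 + d) * α - 2 * d) * (3 * d * α + 2 * d - α ^ 2) :=
        mul_pos hA' (by linarith)
      linarith [hsq, hp]
    have h3d : 3 * d < α := by nlinarith [hQ, hα0, hd]
    have hR2 : (3 * d / 2 * s) ^ 2 ≤ (α - 3 * d / 2) ^ 2 := by
      rw [hL2 ()]; linarith [hQ]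
    nlinarith [hR2, show (0:ℝ) ≤ α - 3 * d / 2 by linarith,
      show (0:ℝ) ≤ 3 * d / 2 * s by positivity]
  · intro h
    have hsm : 3 * d / 2 * s ≤ α - 3 * d / 2 := by linarith
    have hQ : 0 ≤ α ^ 2 - 3 * d * α - 2 * d := by
      have hprod : 0 ≤ (α - 3 * d / 2 - 3 * d / 2 * s) * (α - 3 * d / 2 + 3 * d / 2 * s) := by
        apply mul_nonneg
        · linarith
        · have : (0:ℝ) ≤ 3 * d / 2 * s := by positivity
          linarith
      nlinarith [hprod, hL2 ()]
    have hfrac : d * A / (4 * α) ≤ A ^ 2 / (4 * (α + 2) ^ 2) := by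
      rw [div_le_div_iff₀ (by positivity) (by positivity), hAdef]
      linarith [mul_nonneg hA'.le hQ]
    have hsq : (d / 2 * t) ^ 2 ≤ (A / (2 * (α + 2))) ^ 2 := by
      rw [e1, e2]; exact hfrac
    have key : d / 2 * t ≤ A / (2 * (α + 2)) := by
      nlinarith [hsq, show (0:ℝ) ≤ d / 2 * t by positivity,
        show (0:ℝ) < A / (2 * (α + 2)) by positivity]
    linarith [key, hReq]
end

section
/- Let d ≥ 1 be an integer, α > d real, σ = (d+1)/(α+1), and let X, K, v > 0 be reals. Define 𝒞(r,t) = 2X e^{vt − r^{1−σ}} + K t r^{−σα} (1 + r^{σd}(vt)^d) for r, t > 0. Then for every real γ > (α+1)/(α−d): lim_{t→∞} 𝒞(t^γ, t) = 0. -/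
/- Substituting `r = t^γ` turns `𝒞(r, t)` into `2X e^{vt - t^{γ(1-σ)}}` plus two power laws
`t^{1-γσα}` and `t^{d+1-γσ(α-d)}`. For `σ = (d+1)/(α+1)` both power exponents are negative
and `γ(1-σ) = γ(α-d)/(α+1) > 1` exactly when `γ > (α+1)/(α-d)`, so the exponent
`vt - t^{γ(1-σ)}` tends to `-∞`. -/

open Filter Real

/-- The functional form of the Lieb-Robinson bound after one step of the paper's
iterative construction (Eq. (26)):
`𝒞(r,t) = 2X e^{vt − r^{1−σ}} + K t r^{−σα}(1 + r^{σd}(vt)^d)`. -/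
noncomputable def lrBound (X K v σ α : ℝ) (d : ℕ) (r t : ℝ) : ℝ :=
  2 * X * Real.exp (v * t - r ^ (1 - σ)) +
    K * t * r ^ (-(σ * α)) * (1 + r ^ (σ * (d : ℝ)) * (v * t) ^ d)

lemma tendsto_rpow_atTop_nhds_zero_of_neg {e : ℝ} (he : e < 0) :
    Tendsto (fun t : ℝ => t ^ e) atTop (nhds 0) := by
  simpa using tendsto_rpow_neg_atTop (neg_pos.2 he)

lemma tendsto_exp_mul_sub_rpow_atTop (v : ℝ) {a : ℝ} (ha : 1 < a) :
    Tendsto (fun t : ℝ => exp (v * t - t ^ a)) atTop (nhds 0) := by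
  have hfactor : Tendsto (fun t : ℝ => t * (v - t ^ (a - 1))) atTop atBot := by
    refine tendsto_id.atTop_mul_atBot₀ ?_
    simpa [sub_eq_add_neg] using tendsto_atBot_add_const_left atTop v
      (tendsto_neg_atTop_atBot.comp (tendsto_rpow_atTop (sub_pos.2 ha)))
  refine tendsto_exp_atBot.comp (hfactor.congr' ?_)
  filter_upwards [eventually_gt_atTop 0] with t ht
  rw [mul_sub, ← rpow_one_add' ht.le (by linarith), add_sub_cancel, mul_comm]

lemma lrBound_rpow_eq (X K v σ α : ℝ) (d : ℕ) (γ : ℝ) {t : ℝ} (ht : 0 < t) :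
    lrBound X K v σ α d (t ^ γ) t =
      2 * X * exp (v * t - t ^ (γ * (1 - σ))) +
        (K * t ^ (1 - γ * σ * α) + K * v ^ d * t ^ (d + 1 - γ * σ * (α - d))) := by
  have hdecay : t ^ (1 - γ * σ * α) = t * (t ^ γ) ^ (-(σ * α)) := by
    rw [← rpow_mul ht.le, sub_eq_add_neg, rpow_add ht, rpow_one]
    ring_nf
  have hgrowth : t ^ ((d : ℝ) + 1 - γ * σ * (α - d)) =
      t ^ (1 - γ * σ * α) * ((t ^ γ) ^ (σ * d) * t ^ (d : ℝ)) := by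
    rw [← rpow_mul ht.le, ← rpow_add ht, ← rpow_add ht]
    ring_nf
  rw [lrBound, mul_pow, ← rpow_natCast t d, hgrowth, hdecay, rpow_mul ht.le]
  ring

theorem tendsto_lrBound_rpow_atTop (X K v σ α : ℝ) (d : ℕ) {γ : ℝ}
    (hexp : 1 < γ * (1 - σ)) (hdecay : 1 < γ * σ * α)
    (hgrowth : (d : ℝ) + 1 < γ * σ * (α - d)) :
    Tendsto (fun t : ℝ => lrBound X K v σ α d (t ^ γ) t) atTop (nhds 0) := by
  have hlim := ((tendsto_exp_mul_sub_rpow_atTop v hexp).const_mul (2 * X)).add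
    (((tendsto_rpow_atTop_nhds_zero_of_neg (sub_neg.2 hdecay)).const_mul K).add
      ((tendsto_rpow_atTop_nhds_zero_of_neg (sub_neg.2 hgrowth)).const_mul (K * v ^ d)))
  simp only [mul_zero, add_zero] at hlim
  refine hlim.congr' ?_
  filter_upwards [eventually_gt_atTop 0] with t ht
  rw [lrBound_rpow_eq X K v σ α d γ ht]

theorem lc1_for_iterated_bound_general (d : ℕ) (α : ℝ) (hα : (d : ℝ) < α)
    (X K v : ℝ) :
    ∀ γ : ℝ, (α + 1) / (α - d) < γ →
      Filter.Tendsto (fun t : ℝ => lrBound X K v ((d + 1) / (α + 1)) α d (t ^ γ) t)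
        Filter.atTop (nhds 0) := by
  intro γ hγ
  set σ : ℝ := ((d : ℝ) + 1) / (α + 1)
  have hαd : 0 < α - d := sub_pos.2 hα
  have hα1 : 0 < α + 1 := by linarith [d.cast_nonneg (α := ℝ)]
  have hσ : 0 < σ := by positivity
  have hone_sub : 1 - σ = (α - d) / (α + 1) := by
    simp only [σ]; field_simp; ring
  have hexp : 1 < γ * (1 - σ) := by
    rw [hone_sub, ← mul_div_assoc, one_lt_div hα1]
    rwa [div_lt_iff₀ hαd] at hγ
  have hgrowth : (d : ℝ) + 1 < γ * σ * (α - d) := by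
    have hfactor : γ * σ * (α - d) = ((d : ℝ) + 1) * (γ * (1 - σ)) := by
      rw [hone_sub]; ring
    rw [hfactor]
    exact lt_mul_of_one_lt_right (by positivity) hexp
  have hγ_pos : 0 < γ := (div_pos hα1 hαd).trans hγ
  have hdecay : 1 < γ * σ * α := by
    nlinarith [mul_pos hγ_pos hσ, d.cast_nonneg (α := ℝ)]
  exact tendsto_lrBound_rpow_atTop X K v σ α d hexp hdecay hgrowth

/-- LC1 for the one-step iterated bound with `σ = (d+1)/(α+1)`: every power law
`r = t^γ` with `γ > (α+1)/(α−d)` satisfies `lim_{t→∞} 𝒞(t^γ, t) = 0`. -/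
theorem lc1_for_iterated_bound (d : ℕ) (hd : 1 ≤ d) (α : ℝ) (hα : (d : ℝ) < α)
    (X K v : ℝ) (hX : 0 < X) (hK : 0 < K) (hv : 0 < v) :
    ∀ γ : ℝ, (α + 1) / (α - d) < γ →
      Filter.Tendsto (fun t : ℝ => lrBound X K v ((d + 1) / (α + 1)) α d (t ^ γ) t)
        Filter.atTop (nhds 0) :=
  lc1_for_iterated_bound_general d α hα X K v
end

section
/- Let d ≥ 1 be an integer, α > 2d real, σ = (2d+2)/(α+2), and let X, K, v > 0 be reals. Define 𝒞(r,t) = 2X e^{vt − r^{1−σ}} + K t r^{−σα} (1 + r^{σd}(vt)^d) for r, t > 0. Then for every real γ > (α+2)/(α−2d): lim_{t→∞} t ∫_{t^γ}^∞ r^{d−1} 𝒞(r,t) dr = 0 (in particular the integral is finite for every t > 0). -/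
/-!
Write `σ = (2d+2)/(α+2)` and `p = 1 - σ`, so that `p (α+2) = α - 2d` and the hypothesis on `γ`
reads `γ p > 1`. For `r > 0` the integrand `r^{d-1} 𝒞(r,t)` splits into
`2X e^{vt} r^{d-1} e^{-r^p}`, `K t r^{-1-(d+2p)}` and `K t (vt)^d r^{-1-p(d+2)}`.
Splitting `e^{-r^p} = e^{-r^p/2} e^{-r^p/2}` bounds the tail of the first piece beyond `t^γ` by
`C e^{-t^{γp}/2}`, which beats `t e^{vt}` because `γp > 1`. The other two tails are explicit
powers of `t`; multiplied by `t` they are `O(t^{2-γ(d+2p)})` and `O(t^{(d+2)(1-γp)})`, and both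
exponents are negative.
-/
open Filter Real MeasureTheory

open Set Topology

lemma integral_Ioi_rpow_mul_exp_neg_rpow_le {a p R : ℝ} (ha : -1 < a) (hp : 0 < p)
    (hR : 0 ≤ R) :
    ∫ r in Ioi R, r ^ a * exp (-r ^ p) ≤
      (∫ r in Ioi 0, r ^ a * exp (-(1 / 2) * r ^ p)) * exp (-(R ^ p / 2)) := by
  have hsub : Ioi R ⊆ Ioi 0 := Ioi_subset_Ioi hR
  have hmaj : IntegrableOn (fun r ↦ r ^ a * exp (-(1 / 2) * r ^ p)) (Ioi 0) :=
    integrableOn_rpow_mul_exp_neg_mul_rpow ha hp one_half_pos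
  rw [← integral_mul_const]
  calc ∫ r in Ioi R, r ^ a * exp (-r ^ p)
      ≤ ∫ r in Ioi R, r ^ a * exp (-(1 / 2) * r ^ p) * exp (-(R ^ p / 2)) := by
        refine setIntegral_mono_on ((integrableOn_rpow_mul_exp_neg_rpow ha hp).mono_set hsub)
          ((hmaj.mono_set hsub).mul_const _) measurableSet_Ioi fun r (hRr : R < r) ↦ ?_
        have hr : 0 < r := hR.trans_lt hRr
        have hRrp : R ^ p ≤ r ^ p := rpow_le_rpow hR hRr.le hp.le
        rw [mul_assoc, ← exp_add]
        gcongr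
        linarith
    _ ≤ ∫ r in Ioi 0, r ^ a * exp (-(1 / 2) * r ^ p) * exp (-(R ^ p / 2)) :=
        setIntegral_mono_set (hmaj.mul_const _)
          ((ae_restrict_mem measurableSet_Ioi).mono fun r (hr : 0 < r) ↦ by positivity)
          hsub.eventuallyLE

lemma tendsto_mul_exp_sub_rpow_div_two (v : ℝ) {b : ℝ} (hb : 1 < b) :
    Tendsto (fun t ↦ t * exp (v * t - t ^ b / 2)) atTop (𝓝 0) := by
  have hpow : Tendsto (fun t : ℝ ↦ -(t ^ (b - 1) / 2)) atTop atBot :=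
    tendsto_neg_atTop_atBot.comp <| (tendsto_rpow_atTop (by linarith)).atTop_div_const two_pos
  have hexp : Tendsto (fun t ↦ t * (v + 1 + -(t ^ (b - 1) / 2))) atTop atBot :=
    tendsto_id.atTop_mul_atBot₀ (tendsto_atBot_add_const_left _ _ hpow)
  refine tendsto_of_tendsto_of_tendsto_of_le_of_le' tendsto_const_nhds
    (tendsto_exp_atBot.comp hexp) ?_ ?_
  · filter_upwards [eventually_ge_atTop 0] with t ht using by positivity
  · filter_upwards [eventually_gt_atTop 0] with t ht
    have htb : t * t ^ (b - 1) = t ^ b := by rw [rpow_sub_one ht.ne']; field_simp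
    calc t * exp (v * t - t ^ b / 2) ≤ exp t * exp (v * t - t ^ b / 2) := by
          gcongr; linarith [add_one_le_exp t]
      _ = exp (t * (v + 1 + -(t ^ (b - 1) / 2))) := by
          rw [← exp_add, ← htb]; ring_nf

lemma tendsto_mul_exp_mul_integral_Ioi_rpow_mul_exp_neg_rpow (v : ℝ) {a p γ : ℝ} (ha : -1 < a)
    (hp : 0 < p) (hγ : 1 < γ * p) :
    Tendsto (fun t ↦ t * exp (v * t) * ∫ r in Ioi (t ^ γ), r ^ a * exp (-r ^ p))
      atTop (𝓝 0) := by
  set C := ∫ r in Ioi 0, r ^ a * exp (-(1 / 2) * r ^ p)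
  have hC := (tendsto_mul_exp_sub_rpow_div_two v hγ).const_mul C
  rw [mul_zero] at hC
  refine tendsto_of_tendsto_of_tendsto_of_le_of_le' tendsto_const_nhds hC ?_ ?_
  · filter_upwards [eventually_ge_atTop 0] with t ht
    have hI : 0 ≤ ∫ r in Ioi (t ^ γ), r ^ a * exp (-r ^ p) :=
      setIntegral_nonneg measurableSet_Ioi fun r (hr : t ^ γ < r) ↦
        have : 0 < r := (rpow_nonneg ht γ).trans_lt hr
        by positivity
    positivity
  · filter_upwards [eventually_ge_atTop 0] with t ht
    calc t * exp (v * t) * ∫ r in Ioi (t ^ γ), r ^ a * exp (-r ^ p)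
        ≤ t * exp (v * t) * (C * exp (-((t ^ γ) ^ p / 2))) := by
          gcongr
          exact integral_Ioi_rpow_mul_exp_neg_rpow_le ha hp (rpow_nonneg ht γ)
      _ = C * (t * exp (v * t - t ^ (γ * p) / 2)) := by
          rw [rpow_mul ht, sub_eq_add_neg, exp_add]; ring

lemma integral_Ioi_rpow_eq {q c : ℝ} (hq : q < -1) (hc : 0 < c) :
    ∫ r in Ioi c, r ^ q = c ^ (q + 1) / -(q + 1) := by
  rw [integral_Ioi_rpow_of_lt hq hc, div_neg, neg_div]

lemma tendsto_pow_mul_integral_Ioi_rpow {q γ : ℝ} {e : ℕ} (hq : q < -1)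
    (he : e + γ * (q + 1) < 0) :
    Tendsto (fun t : ℝ ↦ t ^ e * ∫ r in Ioi (t ^ γ), r ^ q) atTop (𝓝 0) := by
  have hlim := (tendsto_rpow_neg_atTop (neg_pos.mpr he)).div_const (-(q + 1))
  rw [zero_div, neg_neg] at hlim
  refine hlim.congr' ?_
  filter_upwards [eventually_gt_atTop 0] with t ht
  rw [integral_Ioi_rpow_eq hq (rpow_pos_of_pos ht γ), ← rpow_mul ht.le, mul_div_assoc',
    ← rpow_natCast, ← rpow_add ht]

lemma lrBound_exponents {d : ℕ} {α σ γ : ℝ} (hα : 2 * (d : ℝ) < α)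
    (hσ : σ * (α + 2) = 2 * d + 2) (hγ : (α + 2) / (α - 2 * d) < γ) :
    0 < 1 - σ ∧ 1 < γ * (1 - σ) ∧
      (d : ℝ) - 1 - σ * α < -1 ∧ 2 + γ * ((d : ℝ) - 1 - σ * α + 1) < 0 ∧
      (d : ℝ) - 1 - σ * α + σ * d < -1 ∧ d + 2 + γ * ((d : ℝ) - 1 - σ * α + σ * d + 1) < 0 := by
  have hd : (0 : ℝ) ≤ d := d.cast_nonneg
  have hp : (1 - σ) * (α + 2) = α - 2 * d := by linear_combination -hσ
  have hα₂ : 0 < α + 2 := by linarith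
  have hp₀ : 0 < 1 - σ := pos_of_mul_pos_left (by rw [hp]; linarith) hα₂.le
  have hγp : 1 < γ * (1 - σ) := by
    rw [div_lt_iff₀ (by linarith), ← hp, ← mul_assoc] at hγ
    exact lt_of_mul_lt_mul_right (by linarith) hα₂.le
  have hγ₀ : 0 < γ := pos_of_mul_pos_left (by linarith) hp₀.le
  have hq₁ : (d : ℝ) - 1 - σ * α + 1 = -(d + 2 * (1 - σ)) := by linear_combination -hσ
  have hq₂ : (d : ℝ) - 1 - σ * α + σ * d + 1 = -((d + 2) * (1 - σ)) := by linear_combination -hσ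
  refine ⟨hp₀, hγp, by linarith, ?_, by nlinarith, ?_⟩
  · rw [hq₁]; nlinarith
  · rw [hq₂]; nlinarith

lemma pow_mul_lrBound_eq {d : ℕ} (hd : 1 ≤ d) (X K v σ α t : ℝ) {r : ℝ} (hr : 0 < r) :
    r ^ (d - 1) * lrBound X K v σ α d r t =
      2 * X * exp (v * t) * (r ^ ((d : ℝ) - 1) * exp (-r ^ (1 - σ))) +
        K * t * r ^ ((d : ℝ) - 1 - σ * α) +
        K * t * (v * t) ^ d * r ^ ((d : ℝ) - 1 - σ * α + σ * d) := by
  have hpow : r ^ (d - 1) = r ^ ((d : ℝ) - 1) := by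
    rw [← rpow_natCast, Nat.cast_sub hd, Nat.cast_one]
  rw [lrBound, hpow, sub_eq_add_neg (_ - _), rpow_add hr, rpow_add hr, rpow_add hr,
    sub_eq_add_neg (v * t), exp_add]
  ring

lemma integral_Ioi_pow_mul_lrBound {d : ℕ} (hd : 1 ≤ d) (X K v t : ℝ) {σ α R : ℝ} (hR : 0 < R)
    (hσ : σ < 1) (hq₁ : (d : ℝ) - 1 - σ * α < -1) (hq₂ : (d : ℝ) - 1 - σ * α + σ * d < -1) :
    IntegrableOn (fun r ↦ r ^ (d - 1) * lrBound X K v σ α d r t) (Ioi R) ∧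
      ∫ r in Ioi R, r ^ (d - 1) * lrBound X K v σ α d r t =
        2 * X * exp (v * t) * (∫ r in Ioi R, r ^ ((d : ℝ) - 1) * exp (-r ^ (1 - σ))) +
          K * t * (∫ r in Ioi R, r ^ ((d : ℝ) - 1 - σ * α)) +
          K * t * (v * t) ^ d * ∫ r in Ioi R, r ^ ((d : ℝ) - 1 - σ * α + σ * d) := by
  have h₀ : IntegrableOn (fun r ↦ r ^ ((d : ℝ) - 1) * exp (-r ^ (1 - σ))) (Ioi R) :=
    (integrableOn_rpow_mul_exp_neg_rpow (by simp; omega) (by linarith)).mono_set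
      (Ioi_subset_Ioi hR.le)
  have h₁ := (integrableOn_Ioi_rpow_of_lt hq₁ hR).const_mul (K * t)
  have h₂ := (integrableOn_Ioi_rpow_of_lt hq₂ hR).const_mul (K * t * (v * t) ^ d)
  have h₀₁ : IntegrableOn (fun r ↦ 2 * X * exp (v * t) * (r ^ ((d : ℝ) - 1) *
      exp (-r ^ (1 - σ))) + K * t * r ^ ((d : ℝ) - 1 - σ * α)) (Ioi R) :=
    (h₀.const_mul _).add h₁
  have hEq : EqOn (fun r ↦ r ^ (d - 1) * lrBound X K v σ α d r t) _ (Ioi R) :=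
    fun r (hr : R < r) ↦ pow_mul_lrBound_eq hd X K v σ α t (hR.trans hr)
  refine ⟨IntegrableOn.congr_fun (h₀₁.add h₂) hEq.symm measurableSet_Ioi, ?_⟩
  rw [setIntegral_congr_fun measurableSet_Ioi hEq, integral_add h₀₁ h₂,
    integral_add (h₀.const_mul _) h₁, integral_const_mul, integral_const_mul, integral_const_mul]

theorem lc2_for_iterated_bound_general (d : ℕ) (hd : 1 ≤ d) (α : ℝ) (hα : 2 * (d : ℝ) < α)
    (X K v : ℝ) :
    ∀ γ : ℝ, (α + 2) / (α - 2 * d) < γ →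
      (∀ t : ℝ, 0 < t →
        IntegrableOn
          (fun r : ℝ => r ^ (d - 1) * lrBound X K v ((2 * d + 2) / (α + 2)) α d r t)
          (Set.Ioi (t ^ γ))) ∧
      Filter.Tendsto
        (fun t : ℝ => t * ∫ r in Set.Ioi (t ^ γ),
          r ^ (d - 1) * lrBound X K v ((2 * d + 2) / (α + 2)) α d r t)
        Filter.atTop (nhds 0) := by
  intro γ hγ
  obtain ⟨hp, hγp, hq₁, he₁, hq₂, he₂⟩ :=
    lrBound_exponents hα (div_mul_cancel₀ _ (by linarith : α + 2 ≠ 0)) hγ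
  have hsplit (t : ℝ) (ht : 0 < t) :=
    integral_Ioi_pow_mul_lrBound hd X K v t (rpow_pos_of_pos ht γ) (sub_pos.mp hp) hq₁ hq₂
  refine ⟨fun t ht ↦ (hsplit t ht).1, ?_⟩
  have hexp := tendsto_mul_exp_mul_integral_Ioi_rpow_mul_exp_neg_rpow v
    (by simp; omega : -1 < (d : ℝ) - 1) hp hγp
  have hpow₁ := tendsto_pow_mul_integral_Ioi_rpow (γ := γ) (e := 2) hq₁ (by simpa using he₁)
  have hpow₂ := tendsto_pow_mul_integral_Ioi_rpow (γ := γ) (e := d + 2) hq₂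
    (by push_cast; exact he₂)
  have hsum := ((hexp.const_mul (2 * X)).add (hpow₁.const_mul K)).add
    (hpow₂.const_mul (K * v ^ d))
  rw [mul_zero, mul_zero, mul_zero, add_zero, add_zero] at hsum
  refine hsum.congr' ?_
  filter_upwards [eventually_gt_atTop 0] with t ht
  rw [(hsplit t ht).2]
  ring

/-- LC2 for the one-step iterated bound with `σ = (2d+2)/(α+2)` and `α > 2d`:
every power law `r = t^γ` with `γ > (α+2)/(α−2d)` satisfies
`lim_{t→∞} t ∫_{t^γ}^∞ r^{d−1} 𝒞(r,t) dr = 0`, and the integral is finite for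
every `t > 0` (Appendix D.2 of the paper). -/
theorem lc2_for_iterated_bound (d : ℕ) (hd : 1 ≤ d) (α : ℝ) (hα : 2 * (d : ℝ) < α)
    (X K v : ℝ) (hX : 0 < X) (hK : 0 < K) (hv : 0 < v) :
    ∀ γ : ℝ, (α + 2) / (α - 2 * d) < γ →
      (∀ t : ℝ, 0 < t →
        IntegrableOn
          (fun r : ℝ => r ^ (d - 1) * lrBound X K v ((2 * d + 2) / (α + 2)) α d r t)
          (Set.Ioi (t ^ γ))) ∧
      Filter.Tendsto
        (fun t : ℝ => t * ∫ r in Set.Ioi (t ^ γ),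
          r ^ (d - 1) * lrBound X K v ((2 * d + 2) / (α + 2)) α d r t)
        Filter.atTop (nhds 0) :=
  lc2_for_iterated_bound_general d hd α hα X K v
end

section
/- Let d ≥ 1 be an integer, α > d real, γ = (1+d)/(α−d), and v > 0 real. Define 𝒞_FF(r,t) = exp(vt − r/t^γ) + t^{(α+d)(1+γ)} r^{−(α+d)} for r > 0 and t > 1. Then for every real γ' > (α+d)(α+1)/(α(α−d)) + 1/α: lim_{t→∞} t ∫_{t^{γ'}}^∞ r^{d−1} 𝒞_FF(r,t) dr = 0 (in particular the integral is finite for every t > 1). -/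
/-!
Split `𝒞_FF` into its two terms. For the exponential one, `rⁿ ≤ n! (2T)ⁿ e^{r/2T}` with
`T = t^γ` bounds the tail integral by `n! (2T)ⁿ⁺¹ e^{vt - t^{γ'}/2T}`, and since
`γ' - γ > 1` the exponent `vt - t^{γ'-γ}/2` beats every power of `t`. The power-law term
integrates exactly to `t^A t^{-αγ'}/α` with `A = (α+d)(1+γ)`. Both conditions on `γ'` come
from the identities `β = 2γ + 1` and `αβ = A + 1` for `β = betaLC2FF α d`.
-/

open Filter Real MeasureTheory

/-- The functional form of the Lieb-Robinson bound of Foss-Feig et al. (in the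
paper's conventions): `𝒞_FF(r,t) = exp(vt − r/t^γ) + t^{(α+d)(1+γ)} r^{−(α+d)}`
with `γ = (1+d)/(α−d)`. -/
noncomputable def ffBound (v α : ℝ) (d : ℕ) (r t : ℝ) : ℝ :=
  Real.exp (v * t - r / t ^ ((1 + (d : ℝ)) / (α - d))) +
    t ^ ((α + (d : ℝ)) * (1 + (1 + (d : ℝ)) / (α - d))) * r ^ (-(α + (d : ℝ)))

/-- The threshold `β^{LC2}_{FF}` of the paper. -/
noncomputable def betaLC2FF (α d : ℝ) : ℝ := (α + d) * (α + 1) / (α * (α - d)) + 1 / α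

section Exponents

variable {α d γ' : ℝ} (hd : 0 ≤ d) (hα : d < α) (h : betaLC2FF α d < γ')
include hd hα h

lemma add_one_lt_of_betaLC2FF_lt : (1 + d) / (α - d) + 1 < γ' := by
  have hαd : 0 < α - d := sub_pos.mpr hα
  have hβ : betaLC2FF α d = 2 * ((1 + d) / (α - d)) + 1 := by
    unfold betaLC2FF; field_simp [(hd.trans_lt hα).ne']; ring
  have : 0 < (1 + d) / (α - d) := by positivity
  linarith

lemma add_one_lt_mul_of_betaLC2FF_lt : (α + d) * (1 + (1 + d) / (α - d)) + 1 < α * γ' := by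
  have hα0 : 0 < α := hd.trans_lt hα
  have hαβ : α * betaLC2FF α d = (α + d) * (1 + (1 + d) / (α - d)) + 1 := by
    unfold betaLC2FF; field_simp [(sub_pos.mpr hα).ne']; ring
  rw [← hαβ]
  exact mul_lt_mul_of_pos_left h hα0

end Exponents

lemma pow_mul_exp_neg_div_le (n : ℕ) {T r : ℝ} (hT : 0 < T) (hr : 0 ≤ r) :
    r ^ n * exp (-(r / T)) ≤ n.factorial * (2 * T) ^ n * exp (-(2 * T)⁻¹ * r) := by
  have hpow : (r / (2 * T)) ^ n ≤ n.factorial * exp (r / (2 * T)) := by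
    have := pow_div_factorial_le_exp _ (by positivity : 0 ≤ r / (2 * T)) n
    rwa [div_le_iff₀ (by positivity), mul_comm (exp _)] at this
  have hexp : exp (r / (2 * T)) * exp (-(r / T)) = exp (-(2 * T)⁻¹ * r) := by
    rw [← exp_add]; congr 1; field_simp; ring
  calc r ^ n * exp (-(r / T))
      = (2 * T) ^ n * (r / (2 * T)) ^ n * exp (-(r / T)) := by
        rw [← mul_pow, mul_div_cancel₀ _ (by positivity)]
    _ ≤ (2 * T) ^ n * (n.factorial * exp (r / (2 * T))) * exp (-(r / T)) := by gcongr
    _ = n.factorial * (2 * T) ^ n * exp (-(2 * T)⁻¹ * r) := by rw [← hexp]; ring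

lemma integrableOn_pow_mul_exp_neg_div (n : ℕ) {T R : ℝ} (hT : 0 < T) (hR : 0 ≤ R) :
    IntegrableOn (fun r => r ^ n * exp (-(r / T))) (Set.Ioi R) := by
  have ha : -(2 * T)⁻¹ < 0 := by simpa using hT
  refine Integrable.mono' ((integrableOn_exp_mul_Ioi ha R).const_mul
    (n.factorial * (2 * T) ^ n)) (by fun_prop) ?_
  refine (ae_restrict_iff' measurableSet_Ioi).mpr (ae_of_all _ fun r hr => ?_)
  have hr : 0 ≤ r := hR.trans (le_of_lt hr)
  rw [norm_of_nonneg (by positivity)]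
  exact pow_mul_exp_neg_div_le n hT hr

lemma setIntegral_pow_mul_exp_neg_div_le (n : ℕ) {T R : ℝ} (hT : 0 < T) (hR : 0 ≤ R) :
    ∫ r in Set.Ioi R, r ^ n * exp (-(r / T)) ≤
      n.factorial * (2 * T) ^ (n + 1) * exp (-(R / (2 * T))) := by
  have ha : -(2 * T)⁻¹ < 0 := by simpa using hT
  calc ∫ r in Set.Ioi R, r ^ n * exp (-(r / T))
      ≤ ∫ r in Set.Ioi R, n.factorial * (2 * T) ^ n * exp (-(2 * T)⁻¹ * r) :=
        setIntegral_mono_on (integrableOn_pow_mul_exp_neg_div n hT hR)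
          ((integrableOn_exp_mul_Ioi ha R).const_mul _) measurableSet_Ioi
          fun r hr => pow_mul_exp_neg_div_le n hT (hR.trans (le_of_lt hr))
    _ = n.factorial * (2 * T) ^ (n + 1) * exp (-(R / (2 * T))) := by
        rw [integral_const_mul, integral_exp_mul_Ioi ha]
        field_simp
        ring

lemma tendsto_rpow_mul_exp_sub_mul_rpow_atTop (k v : ℝ) {c δ : ℝ} (hc : 0 < c) (hδ : 1 < δ) :
    Tendsto (fun t => t ^ k * exp (v * t - c * t ^ δ)) atTop (nhds 0) := by
  have hgrowth : Tendsto (fun t : ℝ => t * (c * t ^ (δ - 1) - (v + 1))) atTop atTop :=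
    tendsto_id.atTop_mul_atTop₀ <| tendsto_atTop_add_const_right _ _ <|
      (tendsto_rpow_atTop (by linarith)).const_mul_atTop hc
  have hdecay : Tendsto (fun t => exp ((v + 1) * t - c * t ^ δ)) atTop (nhds 0) := by
    refine tendsto_exp_atBot.comp (tendsto_neg_atTop_atBot.comp hgrowth |>.congr' ?_)
    filter_upwards [eventually_gt_atTop 0] with t ht
    simp only [Function.comp, rpow_sub ht, rpow_one]
    field_simp
    ring
  have := (tendsto_rpow_mul_exp_neg_mul_atTop_nhds_zero k 1 one_pos).mul hdecay
  rw [zero_mul] at this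
  refine this.congr fun t => ?_
  rw [mul_assoc, ← exp_add]
  congr 2
  ring

lemma integral_pow_mul_exp_sub_div (n : ℕ) (c T R : ℝ) :
    ∫ r in Set.Ioi R, r ^ n * exp (c - r / T) =
      exp c * ∫ r in Set.Ioi R, r ^ n * exp (-(r / T)) := by
  rw [← integral_const_mul]
  congr 1 with r
  rw [sub_eq_add_neg, exp_add]
  ring

lemma integrableOn_pow_mul_exp_sub_div (n : ℕ) (c : ℝ) {T R : ℝ} (hT : 0 < T) (hR : 0 ≤ R) :
    IntegrableOn (fun r => r ^ n * exp (c - r / T)) (Set.Ioi R) :=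
  IntegrableOn.congr_fun ((integrableOn_pow_mul_exp_neg_div n hT hR).const_mul (exp c))
    (fun r _ => by rw [sub_eq_add_neg, exp_add]; ring) measurableSet_Ioi

lemma tendsto_mul_setIntegral_pow_mul_exp_tail (n : ℕ) (v : ℝ) {γ γ' : ℝ}
    (h : γ + 1 < γ') :
    Tendsto (fun t => t * ∫ r in Set.Ioi (t ^ γ'), r ^ n * exp (v * t - r / t ^ γ))
      atTop (nhds 0) := by
  have key := (tendsto_rpow_mul_exp_sub_mul_rpow_atTop (1 + γ * (n + 1)) v
    (by norm_num : (0 : ℝ) < 2⁻¹) (by linarith : 1 < γ' - γ)).const_mul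
      ((n.factorial : ℝ) * 2 ^ (n + 1))
  rw [mul_zero] at key
  refine squeeze_zero' ?_ ?_ key
  · filter_upwards [eventually_gt_atTop 0] with t ht
    refine mul_nonneg ht.le (setIntegral_nonneg measurableSet_Ioi fun r hr => ?_)
    have : 0 ≤ r := (rpow_pos_of_pos ht γ').le.trans (le_of_lt hr)
    positivity
  · filter_upwards [eventually_gt_atTop 0] with t ht
    have hT : 0 < t ^ γ := rpow_pos_of_pos ht γ
    rw [integral_pow_mul_exp_sub_div]
    calc t * (exp (v * t) * ∫ r in Set.Ioi (t ^ γ'), r ^ n * exp (-(r / t ^ γ)))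
        ≤ t * (exp (v * t) * (n.factorial * (2 * t ^ γ) ^ (n + 1) *
            exp (-(t ^ γ' / (2 * t ^ γ))))) := by
          gcongr
          exact setIntegral_pow_mul_exp_neg_div_le n hT (rpow_nonneg ht.le γ')
      _ = n.factorial * 2 ^ (n + 1) *
            (t ^ (1 + γ * (n + 1)) * exp (v * t - 2⁻¹ * t ^ (γ' - γ))) := by
          rw [rpow_add ht, rpow_one, rpow_mul ht.le, ← Nat.cast_add_one, rpow_natCast,
            rpow_sub ht, sub_eq_add_neg, exp_add]
          field_simp
          ring

lemma integrableOn_Ioi_pow_mul_rpow (n : ℕ) {s R : ℝ} (hs : n + s < -1) (hR : 0 < R) :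
    IntegrableOn (fun r => r ^ n * r ^ s) (Set.Ioi R) :=
  (integrableOn_Ioi_rpow_of_lt hs hR).congr_fun
    (fun r hr => by beta_reduce; rw [rpow_add (hR.trans hr), rpow_natCast]) measurableSet_Ioi

lemma integral_Ioi_pow_mul_rpow (n : ℕ) {s R : ℝ} (hs : n + s < -1) (hR : 0 < R) :
    ∫ r in Set.Ioi R, r ^ n * r ^ s = -R ^ (n + s + 1) / (n + s + 1) := by
  rw [← integral_Ioi_rpow_of_lt hs hR]
  exact setIntegral_congr_fun measurableSet_Ioi
    fun r hr => by rw [rpow_add (hR.trans hr), rpow_natCast]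

lemma tendsto_mul_setIntegral_pow_mul_rpow_tail (n : ℕ) {s A γ' : ℝ} (hs : n + s < -1)
    (h : 1 + A + (n + s + 1) * γ' < 0) :
    Tendsto (fun t : ℝ => t * ∫ r : ℝ in Set.Ioi (t ^ γ'), r ^ n * (t ^ A * r ^ s))
      atTop (nhds 0) := by
  have key := (tendsto_rpow_neg_atTop (neg_pos.mpr h)).mul_const (-(n + s + 1 : ℝ))⁻¹
  rw [zero_mul, neg_neg] at key
  refine key.congr' ?_
  filter_upwards [eventually_gt_atTop 0] with t ht
  simp only [mul_left_comm _ (t ^ A)]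
  rw [integral_const_mul, integral_Ioi_pow_mul_rpow n hs (rpow_pos_of_pos ht γ'),
    ← rpow_mul ht.le, rpow_add ht, rpow_add ht, rpow_one]
  field_simp

theorem lc2_for_foss_feig_bound_general (d : ℕ) (hd : 1 ≤ d) (α : ℝ) (hα : (d : ℝ) < α)
    (v : ℝ) :
    ∀ γ' : ℝ, (α + d) * (α + 1) / (α * (α - d)) + 1 / α < γ' →
      (∀ t : ℝ, 1 < t →
        IntegrableOn (fun r : ℝ => r ^ (d - 1) * ffBound v α d r t)
          (Set.Ioi (t ^ γ'))) ∧
      Filter.Tendsto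
        (fun t : ℝ => t * ∫ r in Set.Ioi (t ^ γ'), r ^ (d - 1) * ffBound v α d r t)
        Filter.atTop (nhds 0) := by
  intro γ' hγ'
  set γ : ℝ := (1 + (d : ℝ)) / (α - d)
  set A : ℝ := (α + (d : ℝ)) * (1 + γ)
  have hexp : γ + 1 < γ' := add_one_lt_of_betaLC2FF_lt d.cast_nonneg hα hγ'
  have hs : ((d - 1 : ℕ) : ℝ) + -(α + d) < -1 := by
    rw [Nat.cast_sub hd, Nat.cast_one]; linarith
  have hpow : 1 + A + ((d - 1 : ℕ) + -(α + d) + 1) * γ' < 0 := by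
    rw [Nat.cast_sub hd, Nat.cast_one]
    linarith [add_one_lt_mul_of_betaLC2FF_lt d.cast_nonneg hα hγ']
  have hint₁ : ∀ t : ℝ, 0 < t →
      IntegrableOn (fun r => r ^ (d - 1) * exp (v * t - r / t ^ γ)) (Set.Ioi (t ^ γ')) :=
    fun t ht => integrableOn_pow_mul_exp_sub_div _ _ (rpow_pos_of_pos ht _) (rpow_nonneg ht.le _)
  have hint₂ : ∀ t : ℝ, 0 < t →
      IntegrableOn (fun r => r ^ (d - 1) * (t ^ A * r ^ (-(α + d)))) (Set.Ioi (t ^ γ')) :=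
    fun t ht => IntegrableOn.congr_fun
      ((integrableOn_Ioi_pow_mul_rpow _ hs (rpow_pos_of_pos ht _)).const_mul _)
      (fun r _ => by ring) measurableSet_Ioi
  have hsplit : ∀ t r : ℝ, r ^ (d - 1) * ffBound v α d r t =
      r ^ (d - 1) * exp (v * t - r / t ^ γ) + r ^ (d - 1) * (t ^ A * r ^ (-(α + d))) :=
    fun t r => mul_add _ _ _
  simp only [hsplit]
  refine ⟨fun t ht => (hint₁ t (one_pos.trans ht)).add (hint₂ t (one_pos.trans ht)), ?_⟩
  have hsum := (tendsto_mul_setIntegral_pow_mul_exp_tail (d - 1) v hexp).add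
    (tendsto_mul_setIntegral_pow_mul_rpow_tail (d - 1) hs hpow)
  rw [add_zero] at hsum
  refine hsum.congr' ?_
  filter_upwards [eventually_gt_atTop 0] with t ht
  rw [integral_add (hint₁ t ht) (hint₂ t ht), mul_add t]

/-- Appendix D.2 of the paper: every power law `r = t^{γ'}` with
`γ' > (α+d)(α+1)/(α(α−d)) + 1/α` is an LC2 light-cone for the Foss-Feig et al.
bound: `lim_{t→∞} t ∫_{t^{γ'}}^∞ r^{d−1} 𝒞_FF(r,t) dr = 0`, with the integral
finite for every `t > 1`. -/
theorem lc2_for_foss_feig_bound (d : ℕ) (hd : 1 ≤ d) (α : ℝ) (hα : (d : ℝ) < α)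
    (v : ℝ) (hv : 0 < v) :
    ∀ γ' : ℝ, (α + d) * (α + 1) / (α * (α - d)) + 1 / α < γ' →
      (∀ t : ℝ, 1 < t →
        IntegrableOn (fun r : ℝ => r ^ (d - 1) * ffBound v α d r t)
          (Set.Ioi (t ^ γ'))) ∧
      Filter.Tendsto
        (fun t : ℝ => t * ∫ r in Set.Ioi (t ^ γ'), r ^ (d - 1) * ffBound v α d r t)
        Filter.atTop (nhds 0) :=
  lc2_for_foss_feig_bound_general d hd α hα v
end
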